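/- arXiv:2204.06477 — 2 statements merged into one kernel-verified Lean document; each statement's English description precedes it below -/
import Mathlib

section
/- Let f_1,…,f_n : ℝ^d → ℝ be L-smooth, let W ∈ ℝ^{n×n} be doubly stochastic, let η ≥ 0, let H ≥ 1, and let X^{(0)},…,X^{(H−1)} ∈ ℝ^{d×n} be matrices of iterates with columns x_j^{(i)}. Let x̄ ∈ ℝ^d and define x̄' := x̄ − ∑_{i=0}^{H−1} η·(1/n)∑_{j=1}^n ∇f_j(x_j^{(i)}) (i.e. the average parameter after H decentralized gradient steps starting from consensus point x̄). Then ‖∂f(x̄')W − ∂̄f(x̄')‖_F² ≤ 2‖∂f(x̄)W − ∂̄f(x̄)‖_F² + 2H ∑_{i=0}^{H−1} η² L² ‖∂f(X^{(i)})‖_F², where ∂f(X^{(i)}) is the matrix whose j-th column is ∇f_j(x_j^{(i)}). -/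
/-- A matrix is doubly stochastic if all its entries are nonnegative and each
row and each column sums to 1. -/
def DoublyStochastic {n : ℕ} (W : Matrix (Fin n) (Fin n) ℝ) : Prop :=
  (∀ i j, 0 ≤ W i j) ∧ (∀ i, ∑ j, W i j = 1) ∧ (∀ j, ∑ i, W i j = 1)

/-- The column-mean matrix `X̄ := X·(1/n)𝟙𝟙ᵀ` of `X ∈ ℝ^{d×n}`. -/
noncomputable def colMean {d n : ℕ} (X : Matrix (Fin d) (Fin n) ℝ) :
    Matrix (Fin d) (Fin n) ℝ :=
  X * ((n : ℝ)⁻¹ • Matrix.of fun _ _ => (1 : ℝ))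

/-- The squared Frobenius norm `‖M‖_F²` of a matrix. -/
def frobSq {d n : ℕ} (M : Matrix (Fin d) (Fin n) ℝ) : ℝ := ∑ i, ∑ j, (M i j) ^ 2

/-- The matrix `∂f(x) ∈ ℝ^{d×n}` whose `i`-th column is `∇f_i(x)`. -/
noncomputable def gradMatAt {d n : ℕ} (f : Fin n → EuclideanSpace ℝ (Fin d) → ℝ)
    (x : EuclideanSpace ℝ (Fin d)) : Matrix (Fin d) (Fin n) ℝ :=
  Matrix.of fun a i => gradient (f i) x a

/-- The matrix `∂f(X) ∈ ℝ^{d×n}` whose `i`-th column is `∇f_i(x_i)`, where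
`x_i` is the `i`-th column of `X`. -/
noncomputable def gradMat {d n : ℕ} (f : Fin n → EuclideanSpace ℝ (Fin d) → ℝ)
    (X : Matrix (Fin d) (Fin n) ℝ) : Matrix (Fin d) (Fin n) ℝ :=
  Matrix.of fun a i => gradient (f i) ((WithLp.toLp 2 (fun b => X b i) : EuclideanSpace ℝ (Fin d))) a

lemma colMean_apply' {d n : ℕ} (X : Matrix (Fin d) (Fin n) ℝ) (a : Fin d) (j : Fin n) :
    colMean X a j = (n : ℝ)⁻¹ * ∑ k, X a k := by
  unfold colMean
  change ∑ k, X a k * (((n : ℝ)⁻¹ • Matrix.of (fun _ _ => (1 : ℝ))) k j) = _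
  simp [Finset.sum_mul, mul_comm]

lemma colMean_sub' {d n : ℕ} (X Y : Matrix (Fin d) (Fin n) ℝ) :
    colMean (X - Y) = colMean X - colMean Y := by
  ext a j
  simp only [colMean_apply', Matrix.sub_apply, Finset.sum_sub_distrib]
  ring

lemma euc_sum_sq {d : ℕ} (x : EuclideanSpace ℝ (Fin d)) :
    ∑ a, (x a) ^ 2 = ‖x‖ ^ 2 := by
  have h : ‖x‖ ^ 2 = ∑ i, ‖x i‖ ^ 2 := by
    rw [EuclideanSpace.norm_eq]
    exact Real.sq_sqrt (Finset.sum_nonneg fun i _ => by positivity)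
  rw [h]
  simp [Real.norm_eq_abs, sq_abs]

lemma frobSq_nonneg' {d n : ℕ} (M : Matrix (Fin d) (Fin n) ℝ) : 0 ≤ frobSq M := by
  unfold frobSq; positivity

lemma frobSq_add_le' {d n : ℕ} (M N : Matrix (Fin d) (Fin n) ℝ) :
    frobSq (M + N) ≤ 2 * frobSq M + 2 * frobSq N := by
  unfold frobSq
  rw [Finset.mul_sum, Finset.mul_sum, ← Finset.sum_add_distrib]
  refine Finset.sum_le_sum fun a _ => ?_
  rw [Finset.mul_sum, Finset.mul_sum, ← Finset.sum_add_distrib]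
  refine Finset.sum_le_sum fun j _ => ?_
  simp only [Matrix.add_apply]
  nlinarith [sq_nonneg (M a j - N a j)]

lemma norm_sum_sq_le' {E : Type*} [NormedAddCommGroup E] {m : ℕ} (v : Fin m → E) :
    ‖∑ i, v i‖ ^ 2 ≤ (m : ℝ) * ∑ i, ‖v i‖ ^ 2 := by
  have h1 : ‖∑ i, v i‖ ≤ ∑ i, ‖v i‖ := norm_sum_le _ _
  have h2 : ‖∑ i, v i‖ ^ 2 ≤ (∑ i, ‖v i‖) ^ 2 := pow_le_pow_left₀ (norm_nonneg _) h1 2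
  refine h2.trans ?_
  have := sq_sum_le_card_mul_sum_sq (s := (Finset.univ : Finset (Fin m)))
    (f := fun i => ‖v i‖)
  simpa using this

lemma frobSq_mix_le' {d n : ℕ} (D : Matrix (Fin d) (Fin n) ℝ)
    (W : Matrix (Fin n) (Fin n) ℝ) (hW : DoublyStochastic W) :
    frobSq (D * W - colMean D) ≤ frobSq D := by
  obtain ⟨hpos, hrow, hcol⟩ := hW
  refine Finset.sum_le_sum fun a _ => ?_
  set S := ∑ k, D a k with hS
  set c : ℝ := (n : ℝ)⁻¹ * S with hc
  set G : Fin n → ℝ := fun j => ∑ k, D a k * W k j with hG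
  have hentry : ∀ j, (D * W - colMean D) a j = G j - c := by
    intro j
    simp only [Matrix.sub_apply, Matrix.mul_apply, colMean_apply', hG, hc]
    rw [hS]
  have hGsum : ∑ j, G j = S := by
    rw [hG, Finset.sum_comm]
    simp only [← Finset.mul_sum, hrow, mul_one]
    exact hS.symm
  have hGsq : ∀ j, (G j) ^ 2 ≤ ∑ k, (D a k) ^ 2 * W k j := by
    intro j
    have h := Finset.sum_mul_sq_le_sq_mul_sq Finset.univ
      (fun k => D a k * Real.sqrt (W k j)) (fun k => Real.sqrt (W k j))
    have e1 : ∀ k : Fin n, (D a k * Real.sqrt (W k j)) * Real.sqrt (W k j)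
        = D a k * W k j := fun k => by
      rw [mul_assoc, Real.mul_self_sqrt (hpos k j)]
    have e2 : ∀ k : Fin n, (D a k * Real.sqrt (W k j)) ^ 2
        = (D a k) ^ 2 * W k j := fun k => by
      rw [mul_pow, Real.sq_sqrt (hpos k j)]
    have e3 : ∀ k : Fin n, (Real.sqrt (W k j)) ^ 2 = W k j := fun k =>
      Real.sq_sqrt (hpos k j)
    simp only [e1, e2, e3] at h
    rw [hcol j, mul_one] at h
    exact h
  have hGsumsq : ∑ j, (G j) ^ 2 ≤ ∑ k, (D a k) ^ 2 := by
    calc ∑ j, (G j) ^ 2 ≤ ∑ j, ∑ k, (D a k) ^ 2 * W k j :=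
          Finset.sum_le_sum fun j _ => hGsq j
      _ = ∑ k, (D a k) ^ 2 * ∑ j, W k j := by
          rw [Finset.sum_comm]
          exact Finset.sum_congr rfl fun k _ => (Finset.mul_sum _ _ _).symm
      _ = ∑ k, (D a k) ^ 2 := by simp [hrow]
  have hexpand : ∑ j, ((D * W - colMean D) a j) ^ 2
      = (∑ j, (G j) ^ 2) - (2 * c) * S + (n : ℝ) * c ^ 2 := by
    calc ∑ j, ((D * W - colMean D) a j) ^ 2
        = ∑ j, ((G j) ^ 2 - (2 * c) * G j + c ^ 2) := by
          refine Finset.sum_congr rfl fun j _ => ?_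
          rw [hentry j]; ring
      _ = (∑ j, (G j) ^ 2) - (2 * c) * (∑ j, G j) + (n : ℝ) * c ^ 2 := by
          rw [Finset.sum_add_distrib, Finset.sum_sub_distrib, ← Finset.mul_sum]
          simp [Finset.card_univ, mul_comm]
      _ = _ := by rw [hGsum]
  rw [hexpand]
  have hcs : 0 ≤ (n : ℝ)⁻¹ * S ^ 2 := by positivity
  have hnc : (n : ℝ) * c ^ 2 ≤ (n : ℝ)⁻¹ * S ^ 2 := by
    rcases Nat.eq_zero_or_pos n with h | h
    · subst h; simp [hc]
    · have hne : (n : ℝ) ≠ 0 := Nat.cast_ne_zero.mpr h.ne'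
      refine le_of_eq ?_
      rw [hc]
      field_simp
  have hc2 : (2 * c) * S = 2 * ((n : ℝ)⁻¹ * S ^ 2) := by rw [hc]; ring
  linarith [hGsumsq]

/-- Effect of periodic optimization: after `H` decentralized gradient steps
from a consensus point `x̄`, the gradient mixing error of `W` at the new
average `x̄' = x̄ − ∑_{i<H} η·(1/n)∑_j ∇f_j(x_j^{(i)})` is bounded by twice the
error at `x̄` plus `2H ∑_{i<H} η²L²‖∂f(X^{(i)})‖_F²`. -/
theorem periodic_optimization_effect
    (d n : ℕ) (L : ℝ) (f : Fin n → EuclideanSpace ℝ (Fin d) → ℝ)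
    (hdiff : ∀ j, Differentiable ℝ (f j))
    (hL : ∀ j x y, ‖gradient (f j) x - gradient (f j) y‖ ≤ L * ‖x - y‖)
    (W : Matrix (Fin n) (Fin n) ℝ) (hW : DoublyStochastic W)
    (η : ℝ) (hη : 0 ≤ η) (H : ℕ) (hH : 1 ≤ H)
    (X : Fin H → Matrix (Fin d) (Fin n) ℝ)
    (xbar xbar' : EuclideanSpace ℝ (Fin d))
    (hxbar' : xbar' = xbar - ∑ i : Fin H,
      η • ((n : ℝ)⁻¹ • ∑ j, gradient (f j)
        ((WithLp.toLp 2 (fun b => X i b j) : EuclideanSpace ℝ (Fin d))))) :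
    frobSq (gradMatAt f xbar' * W - colMean (gradMatAt f xbar'))
      ≤ 2 * frobSq (gradMatAt f xbar * W - colMean (gradMatAt f xbar))
        + 2 * H * ∑ i : Fin H, η ^ 2 * L ^ 2 * frobSq (gradMat f (X i)) := by
  rcases Nat.eq_zero_or_pos n with hn | hn
  · subst hn
    simp [frobSq]
  have hnne : (n : ℝ) ≠ 0 := Nat.cast_ne_zero.mpr hn.ne'
  set A' := gradMatAt f xbar' with hA'
  set A := gradMatAt f xbar with hA
  set D := A' - A with hDdef
  have hsplit : A' * W - colMean A' = (A * W - colMean A) + (D * W - colMean D) := by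
    simp only [hDdef, colMean_sub', Matrix.sub_mul]
    abel
  rw [hsplit]
  refine (frobSq_add_le' _ _).trans ?_
  have hmix := frobSq_mix_le' D W hW
  -- bound on frobSq D
  have hD_le : frobSq D ≤ (n : ℝ) * (L ^ 2 * ‖xbar' - xbar‖ ^ 2) := by
    unfold frobSq
    rw [Finset.sum_comm]
    have hcol : ∀ j : Fin n, ∑ a, (D a j) ^ 2 ≤ L ^ 2 * ‖xbar' - xbar‖ ^ 2 := by
      intro j
      calc ∑ a, (D a j) ^ 2
          = ∑ a, ((gradient (f j) xbar' - gradient (f j) xbar) a) ^ 2 := by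
            refine Finset.sum_congr rfl fun a _ => ?_
            simp [hDdef, hA, hA', gradMatAt, Matrix.sub_apply]
        _ = ‖gradient (f j) xbar' - gradient (f j) xbar‖ ^ 2 := euc_sum_sq _
        _ ≤ (L * ‖xbar' - xbar‖) ^ 2 :=
            pow_le_pow_left₀ (norm_nonneg _) (hL j xbar' xbar) 2
        _ = L ^ 2 * ‖xbar' - xbar‖ ^ 2 := by ring
    calc ∑ j : Fin n, ∑ a, (D a j) ^ 2
        ≤ ∑ _j : Fin n, L ^ 2 * ‖xbar' - xbar‖ ^ 2 :=
          Finset.sum_le_sum fun j _ => hcol j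
      _ = (n : ℝ) * (L ^ 2 * ‖xbar' - xbar‖ ^ 2) := by
          simp [Finset.card_univ, mul_comm]
  -- bound on the displacement
  have hΔ : ‖xbar' - xbar‖ ^ 2
      ≤ (H : ℝ) * ∑ i : Fin H, η ^ 2 * ((n : ℝ)⁻¹ * frobSq (gradMat f (X i))) := by
    have heq : xbar' - xbar = -(∑ i : Fin H,
        η • ((n : ℝ)⁻¹ • ∑ j, gradient (f j)
          ((WithLp.toLp 2 (fun b => X i b j) : EuclideanSpace ℝ (Fin d))))) := by
      rw [hxbar']; abel
    rw [heq, norm_neg]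
    refine (norm_sum_sq_le' _).trans ?_
    refine mul_le_mul_of_nonneg_left (Finset.sum_le_sum fun i _ => ?_) (Nat.cast_nonneg H)
    -- per-step bound
    have hF : ∑ j, ‖gradient (f j)
        ((WithLp.toLp 2 (fun b => X i b j) : EuclideanSpace ℝ (Fin d)))‖ ^ 2
        = frobSq (gradMat f (X i)) := by
      unfold frobSq
      rw [Finset.sum_comm]
      refine Finset.sum_congr rfl fun j _ => ?_
      rw [← euc_sum_sq]
      rfl
    have hg := norm_sum_sq_le' (fun j => gradient (f j)
        ((WithLp.toLp 2 (fun b => X i b j) : EuclideanSpace ℝ (Fin d))))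
    rw [hF] at hg
    rw [norm_smul, norm_smul, mul_pow, mul_pow]
    have h1 : ‖η‖ ^ 2 = η ^ 2 := by rw [Real.norm_eq_abs, sq_abs]
    have h2 : ‖(n : ℝ)⁻¹‖ ^ 2 = ((n : ℝ)⁻¹) ^ 2 := by
      rw [Real.norm_eq_abs, sq_abs]
    rw [h1, h2]
    have hstep : ((n : ℝ)⁻¹) ^ 2 * ‖∑ j, gradient (f j)
        ((WithLp.toLp 2 (fun b => X i b j) : EuclideanSpace ℝ (Fin d)))‖ ^ 2
        ≤ (n : ℝ)⁻¹ * frobSq (gradMat f (X i)) := by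
      calc ((n : ℝ)⁻¹) ^ 2 * ‖∑ j, gradient (f j)
            ((WithLp.toLp 2 (fun b => X i b j) : EuclideanSpace ℝ (Fin d)))‖ ^ 2
          ≤ ((n : ℝ)⁻¹) ^ 2 * ((n : ℝ) * frobSq (gradMat f (X i))) := by
            gcongr
        _ = (n : ℝ)⁻¹ * frobSq (gradMat f (X i)) := by
            field_simp
    calc η ^ 2 * (((n : ℝ)⁻¹) ^ 2 * ‖∑ j, gradient (f j)
          ((WithLp.toLp 2 (fun b => X i b j) : EuclideanSpace ℝ (Fin d)))‖ ^ 2)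
        ≤ η ^ 2 * ((n : ℝ)⁻¹ * frobSq (gradMat f (X i))) := by
          gcongr
      _ = η ^ 2 * ((n : ℝ)⁻¹ * frobSq (gradMat f (X i))) := rfl
  have hfinal : frobSq D ≤ (H : ℝ) * ∑ i : Fin H, η ^ 2 * L ^ 2 * frobSq (gradMat f (X i)) := by
    refine hD_le.trans ?_
    calc (n : ℝ) * (L ^ 2 * ‖xbar' - xbar‖ ^ 2)
        ≤ (n : ℝ) * (L ^ 2 * ((H : ℝ) *
            ∑ i : Fin H, η ^ 2 * ((n : ℝ)⁻¹ * frobSq (gradMat f (X i))))) := by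
          gcongr
      _ = (H : ℝ) * ((n : ℝ) * L ^ 2 *
            ∑ i : Fin H, η ^ 2 * ((n : ℝ)⁻¹ * frobSq (gradMat f (X i)))) := by ring
      _ = (H : ℝ) * ∑ i : Fin H, η ^ 2 * L ^ 2 * frobSq (gradMat f (X i)) := by
          congr 1
          rw [Finset.mul_sum]
          refine Finset.sum_congr rfl fun i _ => ?_
          field_simp
  linarith [hmix, hfinal]
end

section
/- Let f_1,…,f_n : ℝ^d → ℝ be convex and L-smooth, let f := (1/n)∑_i f_i, and let x* ∈ ℝ^d satisfy ∑_{i=1}^n ∇f_i(x*) = 0 (i.e. x* is a stationary point of f). Then for every x ∈ ℝ^d: ∑_{i=1}^n ‖∇f_i(x) − ∇f_i(x*)‖² ≤ 2 L n (f(x) − f(x*)). -/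
/-!
For convex `L`-smooth `g`, bound `g` at the gradient step `x - (∇g x - ∇g y) / L` from above by
the descent lemma at `x` and from below by the supporting hyperplane at `y`; this gives
co-coercivity, `‖∇g x - ∇g y‖² ≤ 2L (g x - g y - ⟪∇g y, x - y⟫)`. Summing it over the `f i` with
`y = x*`, the linear terms add up to `⟪∑ ∇f_i x*, x - x*⟫ = 0`.
-/

open Set RealInnerProductSpace

section Gradient

variable {E : Type*} [NormedAddCommGroup E] [InnerProductSpace ℝ E] [CompleteSpace E]
  {g : E → ℝ}

theorem hasDerivAt_comp_add_smul {x v : E} {t : ℝ} (hg : DifferentiableAt ℝ g (x + t • v)) :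
    HasDerivAt (fun s : ℝ => g (x + s • v)) ⟪gradient g (x + t • v), v⟫ t := by
  have hline : HasDerivAt (fun s : ℝ => x + s • v) v t := by
    simpa using ((hasDerivAt_id t).smul_const v).const_add x
  simpa [InnerProductSpace.toDual_apply_apply, Function.comp_def] using
    hg.hasGradientAt.hasFDerivAt.comp_hasDerivAt t hline

theorem ConvexOn.add_inner_gradient_le {s : Set E} (hconv : ConvexOn ℝ s g) {x y : E}
    (hx : x ∈ s) (hy : y ∈ s) (hg : DifferentiableAt ℝ g y) :
    g y + ⟪gradient g y, x - y⟫ ≤ g x := by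
  let ℓ : ℝ →ᵃ[ℝ] E := AffineMap.lineMap y x
  have hℓ : ∀ t : ℝ, ℓ t = y + t • (x - y) := fun t => by
    simp [ℓ, AffineMap.lineMap_apply, add_comm]
  have hderiv : HasDerivAt (g ∘ ℓ) ⟪gradient g y, x - y⟫ 0 := by
    have h := hasDerivAt_comp_add_smul (x := y) (v := x - y) (t := 0) (by simpa using hg)
    simp only [zero_smul, add_zero] at h
    convert h using 1
    ext t
    simp [hℓ]
  have hslope := (hconv.comp_affineMap ℓ).le_slope_of_hasDerivAt (x := 0) (y := 1)
    (by simpa [ℓ] using hy) (by simpa [ℓ] using hx) one_pos hderiv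
  simp only [slope_def_field, Function.comp_apply, ℓ, AffineMap.lineMap_apply_zero,
    AffineMap.lineMap_apply_one, sub_zero, div_one] at hslope
  linarith

theorem le_add_inner_gradient_add_sq {L : ℝ} (hg : Differentiable ℝ g)
    (hL : ∀ x y, ‖gradient g x - gradient g y‖ ≤ L * ‖x - y‖) (x v : E) :
    g (x + v) ≤ g x + ⟪gradient g x, v⟫ + L / 2 * ‖v‖ ^ 2 := by
  have hφ : ∀ t : ℝ, HasDerivAt (fun s : ℝ => g (x + s • v) - s * ⟪gradient g x, v⟫)
      (⟪gradient g (x + t • v), v⟫ - ⟪gradient g x, v⟫) t := fun t =>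
    (hasDerivAt_comp_add_smul (hg _)).sub (hasDerivAt_mul_const _)
  have hB : ∀ t : ℝ, HasDerivAt (fun s : ℝ => g x + L / 2 * s ^ 2 * ‖v‖ ^ 2)
      (L * t * ‖v‖ ^ 2) t := fun t => by
    refine ((((hasDerivAt_pow 2 t).const_mul (L / 2)).mul_const (‖v‖ ^ 2)).const_add
      (g x)).congr_deriv ?_
    push_cast
    ring
  have bound : ∀ t ∈ Ico (0 : ℝ) 1,
      ⟪gradient g (x + t • v), v⟫ - ⟪gradient g x, v⟫ ≤ L * t * ‖v‖ ^ 2 := fun t ht =>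
    calc ⟪gradient g (x + t • v), v⟫ - ⟪gradient g x, v⟫
        = ⟪gradient g (x + t • v) - gradient g x, v⟫ := (inner_sub_left _ _ _).symm
      _ ≤ ‖gradient g (x + t • v) - gradient g x‖ * ‖v‖ := real_inner_le_norm _ _
      _ ≤ L * ‖(x + t • v) - x‖ * ‖v‖ := by gcongr; exact hL _ _
      _ = L * t * ‖v‖ ^ 2 := by
        rw [add_sub_cancel_left, norm_smul, Real.norm_of_nonneg ht.1]; ring
  have h := image_le_of_deriv_right_le_deriv_boundary
    (fun t _ => (hφ t).continuousAt.continuousWithinAt) (fun t _ => (hφ t).hasDerivWithinAt)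
    (by simp) (fun t _ => (hB t).continuousAt.continuousWithinAt)
    (fun t _ => (hB t).hasDerivWithinAt) bound (right_mem_Icc.2 zero_le_one)
  simp only [one_smul, one_mul, one_pow, mul_one] at h
  linarith

theorem ConvexOn.sq_norm_gradient_sub_le_of_pos (hconv : ConvexOn ℝ univ g)
    (hg : Differentiable ℝ g) {L : ℝ} (hL : ∀ x y, ‖gradient g x - gradient g y‖ ≤ L * ‖x - y‖)
    (hL0 : 0 < L) (x y : E) :
    ‖gradient g x - gradient g y‖ ^ 2 ≤ 2 * L * (g x - g y - ⟪gradient g y, x - y⟫) := by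
  set w := gradient g x - gradient g y
  have hdesc := le_add_inner_gradient_add_sq hg hL x (-L⁻¹ • w)
  have hsupp := hconv.add_inner_gradient_le (mem_univ (x + -L⁻¹ • w)) (mem_univ y) (hg y)
  rw [show x + -L⁻¹ • w - y = (x - y) + -L⁻¹ • w by abel, inner_add_right,
    real_inner_smul_right] at hsupp
  rw [real_inner_smul_right, norm_smul, mul_pow, Real.norm_eq_abs, sq_abs] at hdesc
  have hw : L⁻¹ * ⟪gradient g x, w⟫ - L⁻¹ * ⟪gradient g y, w⟫ = L⁻¹ * ‖w‖ ^ 2 := by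
    rw [← mul_sub, ← inner_sub_left, real_inner_self_eq_norm_sq]
  have hstep : L / 2 * ((-L⁻¹) ^ 2 * ‖w‖ ^ 2) = L⁻¹ * ‖w‖ ^ 2 / 2 := by
    field_simp
  have key : L⁻¹ * ‖w‖ ^ 2 / 2 ≤ g x - g y - ⟪gradient g y, x - y⟫ := by linarith
  calc ‖w‖ ^ 2 = 2 * L * (L⁻¹ * ‖w‖ ^ 2 / 2) := by field_simp
    _ ≤ 2 * L * (g x - g y - ⟪gradient g y, x - y⟫) := by gcongr

theorem ConvexOn.sq_norm_gradient_sub_le (hconv : ConvexOn ℝ univ g)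
    (hg : Differentiable ℝ g) {L : ℝ} (hL : ∀ x y, ‖gradient g x - gradient g y‖ ≤ L * ‖x - y‖)
    (x y : E) :
    ‖gradient g x - gradient g y‖ ^ 2 ≤ 2 * L * (g x - g y - ⟪gradient g y, x - y⟫) := by
  rcases eq_or_ne x y with rfl | hxy
  · simp
  have hL0 : 0 ≤ L := nonneg_of_mul_nonneg_left ((norm_nonneg _).trans (hL x y))
    (norm_pos_iff.2 (sub_ne_zero.2 hxy))
  rcases hL0.eq_or_lt with rfl | hLpos
  · have hgrad : gradient g x = gradient g y := by
      simpa [sub_eq_zero] using hL x y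
    simp [hgrad]
  · exact hconv.sq_norm_gradient_sub_le_of_pos hg hL hLpos x y

end Gradient

/-- For convex `L`-smooth functions `f_1,…,f_n` with `f := (1/n)∑_i f_i` and a
stationary point `x*` of `f` (i.e. `∑_i ∇f_i(x*) = 0`), one has
`∑_i ‖∇f_i(x) − ∇f_i(x*)‖² ≤ 2Ln(f(x) − f(x*))` for every `x`. -/
theorem sum_sq_grad_diff_le_suboptimality
    (d n : ℕ) (L : ℝ)
    (f : Fin n → EuclideanSpace ℝ (Fin d) → ℝ)
    (hconv : ∀ i, ConvexOn ℝ Set.univ (f i))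
    (hdiff : ∀ i, Differentiable ℝ (f i))
    (hL : ∀ i x y, ‖gradient (f i) x - gradient (f i) y‖ ≤ L * ‖x - y‖)
    (xstar : EuclideanSpace ℝ (Fin d))
    (hstar : ∑ i, gradient (f i) xstar = 0) :
    ∀ x : EuclideanSpace ℝ (Fin d),
      ∑ i, ‖gradient (f i) x - gradient (f i) xstar‖ ^ 2
        ≤ 2 * L * n * ((n : ℝ)⁻¹ * ∑ i, f i x - (n : ℝ)⁻¹ * ∑ i, f i xstar) := by
  intro x
  have hlinear : ∑ i, ⟪gradient (f i) xstar, x - xstar⟫ = 0 := by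
    rw [← sum_inner, hstar, inner_zero_left]
  calc ∑ i, ‖gradient (f i) x - gradient (f i) xstar‖ ^ 2
      ≤ ∑ i, 2 * L * (f i x - f i xstar - ⟪gradient (f i) xstar, x - xstar⟫) :=
        Finset.sum_le_sum fun i _ => (hconv i).sq_norm_gradient_sub_le (hdiff i) (hL i) x xstar
    _ = 2 * L * (∑ i, f i x - ∑ i, f i xstar) := by
        rw [← Finset.mul_sum, Finset.sum_sub_distrib, Finset.sum_sub_distrib, hlinear, sub_zero]
    _ = 2 * L * n * ((n : ℝ)⁻¹ * ∑ i, f i x - (n : ℝ)⁻¹ * ∑ i, f i xstar) := by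
        rcases eq_or_ne n 0 with rfl | hn
        · simp
        · field_simp
end
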